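/- Let σ : [0,∞) → [0,∞) be a C² convex function with σ(0) = 0 whose derivative σ' is concave. Then for all r, s > 0 one has r·σ'(s) ≤ σ(r) + σ(s). -/

import Mathlib

/-!
Convexity gives the tangent-line bound `σ s + σ'(s) (r - s) ≤ σ r`, so it suffices to show
`s σ'(s) ≤ 2 σ(s)`. Since `σ ≥ 0 = σ 0`, we have `σ'(0) ≥ 0`, and concavity of `σ'` then gives
`σ'(t) ≥ (t / s) σ'(s)` on `[0, s]`. Hence `σ t - t² σ'(s) / (2 s)` is nondecreasing on `[0, s]`,
which at `t = s` reads `σ(s) ≥ s σ'(s) / 2`.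
-/

open Set

lemma IsMinOn.deriv_nonneg_Ici {f : ℝ → ℝ} {a : ℝ} (h : IsMinOn f (Ici a) a) :
    0 ≤ deriv f a := by
  by_cases hf : DifferentiableAt ℝ f a
  · have hcone : (1 : ℝ) ∈ posTangentConeAt (Ici a) a :=
      mem_posTangentConeAt_of_segment_subset <| by
        rw [segment_eq_Icc (by linarith)]
        exact Icc_subset_Ici_self
    simpa using h.localize.hasFDerivWithinAt_nonneg
      hf.hasDerivAt.hasDerivWithinAt.hasFDerivWithinAt hcone
  · rw [deriv_zero_of_not_differentiableAt hf]

lemma ConvexOn.add_deriv_mul_sub_le {S : Set ℝ} {f : ℝ → ℝ} {x y : ℝ} (hf : ConvexOn ℝ S f)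
    (hx : x ∈ S) (hy : y ∈ S) (hfx : DifferentiableAt ℝ f x) :
    f x + deriv f x * (y - x) ≤ f y := by
  rcases lt_trichotomy x y with hxy | rfl | hxy
  · have := hf.deriv_le_slope hx hy hxy hfx
    rw [slope_def_field, le_div_iff₀ (sub_pos.2 hxy)] at this
    linarith
  · simp
  · have := hf.slope_le_deriv hy hx hxy hfx
    rw [slope_def_field, div_le_iff₀ (sub_pos.2 hxy)] at this
    linarith

lemma ConcaveOn.mul_le_mul_of_map_zero_nonneg {g : ℝ → ℝ} (hg : ConcaveOn ℝ (Ici 0) g)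
    (hg0 : 0 ≤ g 0) {t s : ℝ} (ht : 0 ≤ t) (hts : t ≤ s) : t * g s ≤ s * g t := by
  rcases ht.eq_or_lt with rfl | ht
  · simpa using mul_nonneg (ht.trans hts) hg0
  have hslope := hg.slope_anti self_mem_Ici ⟨mem_Ici.2 ht.le, ht.ne'⟩
    ⟨mem_Ici.2 (ht.le.trans hts), (ht.trans_le hts).ne'⟩ hts
  rw [slope_def_field, slope_def_field, sub_zero, sub_zero,
    div_le_div_iff₀ (ht.trans_le hts) ht] at hslope
  nlinarith

lemma mul_sq_div_two_le_sub_of_mul_le_deriv {f : ℝ → ℝ} {a c : ℝ} (ha : 0 ≤ a)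
    (hf : ContinuousOn f (Icc 0 a)) (hf' : DifferentiableOn ℝ f (Ioo 0 a))
    (h : ∀ t ∈ Ioo 0 a, c * t ≤ deriv f t) : c * a ^ 2 / 2 ≤ f a - f 0 := by
  have hmono : MonotoneOn (fun t => f t - c * t ^ 2 / 2) (Icc 0 a) := by
    refine monotoneOn_of_deriv_nonneg (convex_Icc 0 a) (by fun_prop) ?_ ?_
    · rw [interior_Icc]
      exact hf'.sub (by fun_prop)
    · rw [interior_Icc]
      intro t ht
      have hft := (hf'.differentiableAt (Ioo_mem_nhds ht.1 ht.2)).hasDerivAt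
      have hderiv : HasDerivAt (fun t => f t - c * t ^ 2 / 2) (deriv f t - c * t) t := by
        refine (hft.sub ((hasDerivAt_pow 2 t).const_mul c |>.div_const 2)).congr_deriv ?_
        push_cast
        ring
      rw [hderiv.deriv]
      linarith [h t ht]
  have hends := hmono (left_mem_Icc.2 ha) (right_mem_Icc.2 ha) ha
  simp only at hends
  linarith

lemma mul_deriv_le_two_mul {σ : ℝ → ℝ} (hσ_nonneg : ∀ r ∈ Ici (0 : ℝ), 0 ≤ σ r)
    (hσ_diff : DifferentiableOn ℝ σ (Ici 0)) (hσ_zero : σ 0 = 0)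
    (hσ'_concave : ConcaveOn ℝ (Ici 0) (deriv σ)) {s : ℝ} (hs : 0 < s) :
    s * deriv σ s ≤ 2 * σ s := by
  have hσ'_zero : 0 ≤ deriv σ 0 :=
    IsMinOn.deriv_nonneg_Ici fun x hx => by simpa [hσ_zero] using hσ_nonneg x hx
  have hbound : ∀ t ∈ Ioo 0 s, deriv σ s / s * t ≤ deriv σ t := fun t ht => by
    rw [div_mul_eq_mul_div, div_le_iff₀ hs]
    linarith [hσ'_concave.mul_le_mul_of_map_zero_nonneg hσ'_zero ht.1.le ht.2.le]
  have hquad := mul_sq_div_two_le_sub_of_mul_le_deriv hs.le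
    (hσ_diff.continuousOn.mono Icc_subset_Ici_self)
    (hσ_diff.mono (Ioo_subset_Icc_self.trans Icc_subset_Ici_self)) hbound
  have hcoeff : deriv σ s / s * s ^ 2 / 2 = s * deriv σ s / 2 := by
    field_simp
  rw [hcoeff, hσ_zero, sub_zero] at hquad
  linarith

/-- Inequality (M(T)1): for a C² convex function `σ : [0,∞) → [0,∞)`
with `σ 0 = 0` whose derivative is concave, `r * σ' s ≤ σ r + σ s` for all `r, s > 0`. -/
theorem MT1 (σ : ℝ → ℝ)
    (hσ_nonneg : ∀ r ∈ Set.Ici (0:ℝ), 0 ≤ σ r)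
    (hσ_C2 : ContDiffOn ℝ 2 σ (Set.Ici 0))
    (hσ_convex : ConvexOn ℝ (Set.Ici 0) σ)
    (hσ_zero : σ 0 = 0)
    (hσ'_concave : ConcaveOn ℝ (Set.Ici 0) (deriv σ)) :
    ∀ r s : ℝ, 0 < r → 0 < s → r * deriv σ s ≤ σ r + σ s := by
  intro r s hr hs
  have hdiff : DifferentiableOn ℝ σ (Ici 0) := hσ_C2.differentiableOn two_ne_zero
  have htangent := hσ_convex.add_deriv_mul_sub_le (mem_Ici.2 hs.le) (mem_Ici.2 hr.le)
    (hdiff.differentiableAt (Ici_mem_nhds hs))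
  have hkey := mul_deriv_le_two_mul hσ_nonneg hdiff hσ_zero hσ'_concave hs
  linear_combination htangent + hkey
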